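/- arXiv:quant-ph/0107106 — 8 statements merged into one kernel-verified Lean document; each statement's English description precedes it below -/
import Mathlib

section
/- For binary variables a_0,...,a_{F-1} ∈ ZMod 2 with F ≥ 1 and any fixed index j < F, the sum (∏_{i<F} a_i) + (∏_{i<F} (a_i + 1)) equals ∏_{i<F, i≠j} (a_j + a_i + 1), where all operations are in ZMod 2. -/
/-- Lemma 3: `(∏ aᵢ) + (∏ (aᵢ+1)) = ∏_{i ≠ j} (a_j + aᵢ + 1)` in `ZMod 2`. -/
theorem stmt_1 (F : ℕ) (hF : 1 ≤ F) (a : Fin F → ZMod 2) (j : Fin F) :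
    (∏ i, a i) + (∏ i, (a i + 1))
      = ∏ i ∈ Finset.univ.erase j, (a j + a i + 1) := by
  have h01 : ∀ x : ZMod 2, x = 0 ∨ x = 1 := by decide
  have h1 : (∏ i, a i) = a j * ∏ i ∈ Finset.univ.erase j, a i :=
    (Finset.mul_prod_erase Finset.univ a (Finset.mem_univ j)).symm
  have h2 : (∏ i, (a i + 1)) = (a j + 1) * ∏ i ∈ Finset.univ.erase j, (a i + 1) :=
    (Finset.mul_prod_erase Finset.univ (fun i => a i + 1) (Finset.mem_univ j)).symm
  have h11 : (1 + 1 : ZMod 2) = 0 := by decide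
  rcases h01 (a j) with h | h <;> rw [h1, h2, h]
  · simp
  · rw [h11]
    simp
    exact Finset.prod_congr rfl fun i _ => by rw [add_comm 1 (a i), add_assoc, h11, add_zero]
end

section
/- Let M be a k × k' matrix over ZMod 2 of rank χ, and define p : (ZMod 2)^(k+k') → ZMod 2 by p(x,y) = ∑_{i,j} M_{ij} x_i y_j. Then the maximum over w ∈ (ZMod 2)^(k+k') of |∑_{(x,y)} (−1)^(p(x,y) + ⟨(x,y),w⟩)|^2 divided by 2^(k+k') equals 2^(k+k'−2χ). Equivalently, the PAR under the Walsh–Hadamard transform of the normalized state 2^(−(k+k')/2)(−1)^(p(x,y)) is 2^(k+k'−2χ). -/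
/-!
Summing over `x` first, orthogonality of characters collapses
`∑_{x,y} (-1)^(xᵀMy + x·u + y·v)` to `2^k ∑_{My = u} (-1)^(y·v)`. Every fibre of `y ↦ My`
is empty or a coset of the kernel, which has `2^(k'-χ)` elements, so each Walsh coefficient
has absolute value at most `2^k · 2^(k'-χ)`, attained at `w = 0`.
-/

open Finset Matrix

namespace AddChar

variable {R R' : Type*} [CommRing R] [Fintype R] [DecidableEq R] [CommRing R'] [IsDomain R']
  {ψ : AddChar R R'}

lemma map_sum_eq_prod {A M ι : Type*} [AddCommMonoid A] [CommMonoid M] (φ : AddChar A M)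
    (s : Finset ι) (f : ι → A) : φ (∑ i ∈ s, f i) = ∏ i ∈ s, φ (f i) := by
  induction s using Finset.cons_induction with
  | empty => simp
  | cons i s hi ih => rw [sum_cons, prod_cons, map_add_eq_mul, ih]

lemma sum_dotProduct {ι : Type*} [Fintype ι] [DecidableEq ι] (hψ : ψ.IsPrimitive)
    (v : ι → R) :
    ∑ x : ι → R, ψ (x ⬝ᵥ v) =
      if v = 0 then (Fintype.card R : R') ^ Fintype.card ι else 0 := by
  simp_rw [dotProduct, map_sum_eq_prod]
  rw [← Fintype.prod_sum (fun i a ↦ ψ (a * v i))]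
  rw [Fintype.prod_congr _ _ fun i ↦ sum_mulShift (v i) hψ]
  simp only [Nat.cast_ite, Nat.cast_zero, Fintype.prod_ite_zero, funext_iff, Pi.zero_apply,
    prod_const, card_univ]

lemma sum_bilinear_add_dotProduct {ι κ : Type*} [Fintype ι] [DecidableEq ι] [Fintype κ]
    [DecidableEq κ] (hψ : ψ.IsPrimitive) (M : Matrix ι κ R) (w : (ι → R) × (κ → R)) :
    ∑ x : (ι → R) × (κ → R), ψ (x.1 ⬝ᵥ M *ᵥ x.2 + (x.1 ⬝ᵥ w.1 + x.2 ⬝ᵥ w.2)) =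
      (Fintype.card R : R') ^ Fintype.card ι * ∑ y with M *ᵥ y = -w.1, ψ (y ⬝ᵥ w.2) := by
  calc _ = ∑ y, (∑ x : ι → R, ψ (x ⬝ᵥ (M *ᵥ y + w.1))) * ψ (y ⬝ᵥ w.2) := by
        rw [Fintype.sum_prod_type, sum_comm]
        simp_rw [sum_mul, dotProduct_add, ← add_assoc, map_add_eq_mul]
    _ = _ := by
        simp_rw [sum_dotProduct hψ, ite_mul, zero_mul, add_eq_zero_iff_eq_neg, sum_filter,
          mul_sum, mul_ite, mul_zero]

end AddChar

namespace Matrix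

variable {ι κ : Type*} [Fintype ι] [Fintype κ] [DecidableEq κ]

lemma card_fiber_mulVec_le_card_ker {R : Type*} [CommRing R] [Fintype R] [DecidableEq R]
    (M : Matrix ι κ R) (b : ι → R) :
    #{y | M *ᵥ y = b} ≤ #{y | M *ᵥ y = 0} := by
  by_cases hb : ∃ y, M *ᵥ y = b
  · exact (AddMonoidHom.card_fiber_eq_of_mem_range M.mulVecLin hb ⟨0, mulVec_zero M⟩).le
  · rw [filter_false_of_mem fun y _ hy ↦ hb ⟨y, hy⟩, card_empty]
    exact Nat.zero_le _

lemma card_ker_mulVec {K : Type*} [Field K] [Fintype K] [DecidableEq K]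
    (M : Matrix ι κ K) :
    #{y | M *ᵥ y = 0} = Fintype.card K ^ (Fintype.card κ - M.rank) := by
  classical
  have hker : #{y | M *ᵥ y = 0} = Fintype.card (LinearMap.ker M.mulVecLin) := by
    rw [Fintype.card_subtype]
    simp [LinearMap.mem_ker]
  have rank_nullity := LinearMap.finrank_range_add_finrank_ker M.mulVecLin
  rw [Module.finrank_fintype_fun_eq_card, ← Matrix.rank] at rank_nullity
  rw [hker, Module.card_eq_pow_finrank (K := K)]
  congr 1
  omega

end Matrix

namespace ZMod

noncomputable def signChar : AddChar (ZMod 2) ℝ :=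
  AddChar.zmodChar 2 (by norm_num : (-1 : ℝ) ^ 2 = 1)

lemma signChar_apply (a : ZMod 2) : signChar a = (-1) ^ a.val := rfl

lemma isPrimitive_signChar : signChar.IsPrimitive :=
  .of_ne_one <| (AddChar.zmod_char_ne_one_iff 2 _).mpr <| by norm_num [signChar_apply, val_one]

variable {ι κ : Type*} [Fintype ι] [DecidableEq ι] [Fintype κ] [DecidableEq κ]

lemma abs_sum_signChar_bilinear_add_dotProduct_le (M : Matrix ι κ (ZMod 2))
    (w : (ι → ZMod 2) × (κ → ZMod 2)) :
    |∑ x : (ι → ZMod 2) × (κ → ZMod 2),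
        signChar (x.1 ⬝ᵥ M *ᵥ x.2 + (x.1 ⬝ᵥ w.1 + x.2 ⬝ᵥ w.2))| ≤
      2 ^ Fintype.card ι * #{y | M *ᵥ y = 0} := by
  rw [AddChar.sum_bilinear_add_dotProduct isPrimitive_signChar, ZMod.card, abs_mul]
  push_cast
  rw [abs_pow, abs_two]
  gcongr
  calc _ ≤ ∑ y with M *ᵥ y = -w.1, |signChar (y ⬝ᵥ w.2)| := abs_sum_le_sum_abs _ _
    _ = #{y | M *ᵥ y = -w.1} := by simp [signChar_apply]
    _ ≤ #{y | M *ᵥ y = 0} := by exact_mod_cast M.card_fiber_mulVec_le_card_ker _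

lemma sum_signChar_bilinear (M : Matrix ι κ (ZMod 2)) :
    ∑ x : (ι → ZMod 2) × (κ → ZMod 2), signChar (x.1 ⬝ᵥ M *ᵥ x.2) =
      2 ^ Fintype.card ι * #{y | M *ᵥ y = 0} := by
  simpa using AddChar.sum_bilinear_add_dotProduct isPrimitive_signChar M 0

lemma iSup_sq_abs_sum_signChar_bilinear_add_dotProduct (M : Matrix ι κ (ZMod 2)) :
    ⨆ w : (ι → ZMod 2) × (κ → ZMod 2), |∑ x : (ι → ZMod 2) × (κ → ZMod 2),
        signChar (x.1 ⬝ᵥ M *ᵥ x.2 + (x.1 ⬝ᵥ w.1 + x.2 ⬝ᵥ w.2))| ^ 2 =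
      ((2 : ℝ) ^ Fintype.card ι * #{y | M *ᵥ y = 0}) ^ 2 := by
  refine le_antisymm (ciSup_le fun w ↦ ?_) (le_ciSup_of_le (Set.finite_range _).bddAbove 0 ?_)
  · exact pow_le_pow_left₀ (abs_nonneg _) (abs_sum_signChar_bilinear_add_dotProduct_le M w) 2
  · simp only [Prod.fst_zero, Prod.snd_zero, dotProduct_zero, add_zero]
    rw [sum_signChar_bilinear, abs_of_nonneg (by positivity)]

end ZMod

/-- Theorem: for a bipartite quadratic `p(x,y) = xᵀMy` with `M` of rank `χ` over
`ZMod 2`, the PAR of the Walsh–Hadamard transform of `(−1)^p` is `2^(k+k'−2χ)`. -/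
theorem stmt_6 (k k' χ : ℕ) (M : Matrix (Fin k) (Fin k') (ZMod 2))
    (hχ : M.rank = χ) :
    (⨆ w : (Fin k → ZMod 2) × (Fin k' → ZMod 2),
        |∑ x : (Fin k → ZMod 2) × (Fin k' → ZMod 2),
            (-1 : ℝ) ^ (((∑ i, ∑ j, M i j * x.1 i * x.2 j)
              + ((∑ i, x.1 i * w.1 i) + (∑ j, x.2 j * w.2 j))).val)| ^ 2)
        / 2 ^ (k + k')
      = 2 ^ (k + k' - 2 * χ) := by
  have hform (x : Fin k → ZMod 2) (y : Fin k' → ZMod 2) :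
      ∑ i, ∑ j, M i j * x i * y j = x ⬝ᵥ M *ᵥ y := by
    simp only [dotProduct, mulVec, mul_sum]
    exact sum_congr rfl fun i _ ↦ sum_congr rfl fun j _ ↦ by ring
  simp_rw [hform, ← dotProduct.eq_def, ← ZMod.signChar_apply]
  rw [ZMod.iSup_sq_abs_sum_signChar_bilinear_add_dotProduct, card_ker_mulVec, ZMod.card,
    Fintype.card_fin, Fintype.card_fin, hχ]
  have hχk : χ ≤ k := hχ ▸ M.rank_le_height
  have hχk' : χ ≤ k' := hχ ▸ M.rank_le_width
  rw [div_eq_iff (by positivity)]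
  push_cast
  rw [← pow_add, ← pow_mul, ← pow_add]
  congr 1
  omega
end

section
/- For any unit vector s ∈ ℂ^(2^n), PAR_l(s) = 2^n · sup over unit product vectors l of |⟨s,l⟩|^2 satisfies 1 ≤ PAR_l(s) ≤ 2^n, with PAR_l(s) = 2^n if and only if s is itself (up to global phase) a tensor product of n unit vectors in ℂ^2. -/
/-! The overlap of a unit vector `s` with a product `∏ i, l i (x i)` of unit vectors is an inner
product of two unit vectors of `ℓ²(ι → α)`, since the squared norm of a product vector factors as
`∏ i, ∑ a, ‖l i a‖ ^ 2`. By Cauchy–Schwarz it is at most `1`, with equality exactly when `s` is a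
phase times that product vector. The product vectors form a compact set, so the supremum is
attained; and it is at least `1 / card` by testing against the basis vector at a coordinate where
`‖s x‖ ^ 2 ≥ 1 / card`. -/

open Finset WithLp ComplexConjugate

section UnitVectors

variable {𝕜 β : Type*} [RCLike 𝕜] [Fintype β]

lemma sum_mul_conj_eq_inner (s t : β → 𝕜) :
    ∑ x, s x * conj (t x) = inner 𝕜 (toLp 2 t) (toLp 2 s) := rfl

lemma norm_toLp_eq_one_iff (s : β → 𝕜) : ‖toLp 2 s‖ = 1 ↔ ∑ x, ‖s x‖ ^ 2 = 1 := by
  rw [← EuclideanSpace.norm_sq_eq, pow_eq_one_iff_of_nonneg (norm_nonneg _) two_ne_zero]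

lemma norm_sum_mul_conj_le_one {s t : β → 𝕜} (hs : ∑ x, ‖s x‖ ^ 2 = 1)
    (ht : ∑ x, ‖t x‖ ^ 2 = 1) : ‖∑ x, s x * conj (t x)‖ ≤ 1 := by
  rw [← norm_toLp_eq_one_iff] at hs ht
  simpa [sum_mul_conj_eq_inner, hs, ht] using norm_inner_le_norm (𝕜 := 𝕜) (toLp 2 t) (toLp 2 s)

lemma norm_sum_mul_conj_eq_one_iff {s t : β → 𝕜} (hs : ∑ x, ‖s x‖ ^ 2 = 1)
    (ht : ∑ x, ‖t x‖ ^ 2 = 1) :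
    ‖∑ x, s x * conj (t x)‖ = 1 ↔ ∃ c : 𝕜, ‖c‖ = 1 ∧ s = c • t := by
  rw [← norm_toLp_eq_one_iff] at hs ht
  have hs₀ : toLp 2 s ≠ 0 := norm_ne_zero_iff.mp (by simp [hs])
  have ht₀ : toLp 2 t ≠ 0 := norm_ne_zero_iff.mp (by simp [ht])
  have h := norm_inner_eq_norm_iff (𝕜 := 𝕜) ht₀ hs₀
  rw [hs, ht, mul_one] at h
  rw [sum_mul_conj_eq_inner, h]
  refine ⟨fun ⟨c, _, hc⟩ => ⟨c, ?_, ?_⟩, fun ⟨c, hc, hst⟩ => ⟨c, ?_, ?_⟩⟩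
  · simpa [hs, ht, norm_smul] using (congrArg norm hc).symm
  · simpa using congrArg ofLp hc
  · exact norm_ne_zero_iff.mp (by simp [hc])
  · rw [hst]; rfl

lemma exists_inv_card_le_norm_sq {s : β → 𝕜} (hs : ∑ x, ‖s x‖ ^ 2 = 1) :
    ∃ x, (Fintype.card β : ℝ)⁻¹ ≤ ‖s x‖ ^ 2 := by
  have hne : (univ : Finset β).Nonempty :=
    nonempty_of_sum_ne_zero (f := fun x => ‖s x‖ ^ 2) (by rw [hs]; exact one_ne_zero)
  have hcard : (Fintype.card β : ℝ) ≠ 0 := by simpa using hne.card_pos.ne'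
  obtain ⟨x, -, hx⟩ := exists_le_of_sum_le hne (f := fun _ => (Fintype.card β : ℝ)⁻¹)
    (g := fun x => ‖s x‖ ^ 2) (by simp [hs, hcard])
  exact ⟨x, hx⟩

end UnitVectors

section ProductVectors

variable {ι α 𝕜 : Type*} [RCLike 𝕜]

lemma prod_single_apply [Fintype ι] [DecidableEq ι] [DecidableEq α] (x₀ x : ι → α) :
    ∏ i, Pi.single (M := fun _ => 𝕜) (x₀ i) 1 (x i) = (Pi.single x₀ 1 : (ι → α) → 𝕜) x := by
  by_cases hx : x = x₀
  · simp [hx]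
  · obtain ⟨i, hi⟩ := Function.ne_iff.mp hx
    rw [Pi.single_eq_of_ne hx]
    exact prod_eq_zero (mem_univ i) (Pi.single_eq_of_ne hi 1)

variable [Fintype α]

variable (ι α 𝕜) in
def unitFamilies : Set (ι → α → 𝕜) := {l | ∀ i, ∑ a, ‖l i a‖ ^ 2 = 1}

lemma single_mem_unitFamilies [DecidableEq α] (x₀ : ι → α) :
    (fun i => Pi.single (x₀ i) 1) ∈ unitFamilies ι α 𝕜 := by
  intro i
  simp [Pi.single_apply, apply_ite]

variable [Fintype ι]

lemma isCompact_unitFamilies : IsCompact (unitFamilies ι α 𝕜) := by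
  have hclosed : IsClosed (unitFamilies ι α 𝕜) := by
    rw [unitFamilies, Set.ofPred_forall]
    exact isClosed_iInter fun i => isClosed_eq (by fun_prop) continuous_const
  refine Metric.isCompact_of_isClosed_isBounded hclosed
    (isBounded_iff_forall_norm_le.mpr ⟨1, fun l hl => ?_⟩)
  refine pi_norm_le_iff_of_nonneg zero_le_one |>.mpr fun i =>
    pi_norm_le_iff_of_nonneg zero_le_one |>.mpr fun a => ?_
  have : ‖l i a‖ ^ 2 ≤ 1 :=
    hl i ▸ single_le_sum (f := fun b => ‖l i b‖ ^ 2) (fun b _ => by positivity) (mem_univ a)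
  exact (pow_le_one_iff_of_nonneg (norm_nonneg _) two_ne_zero).mp this

variable [DecidableEq ι]

lemma sum_norm_sq_prod (l : ι → α → 𝕜) :
    ∑ x : ι → α, ‖∏ i, l i (x i)‖ ^ 2 = ∏ i, ∑ a, ‖l i a‖ ^ 2 := by
  simp only [norm_prod, ← prod_pow, Fintype.prod_sum]

lemma sum_norm_sq_prod_eq_one {l : ι → α → 𝕜} (hl : l ∈ unitFamilies ι α 𝕜) :
    ∑ x : ι → α, ‖∏ i, l i (x i)‖ ^ 2 = 1 := by
  rw [sum_norm_sq_prod]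
  exact prod_eq_one fun i _ => hl i

end ProductVectors

section ProductOverlaps

variable {ι α 𝕜 : Type*} [Fintype ι] [DecidableEq ι] [Fintype α] [RCLike 𝕜]

/-- `2 ^ n * sSup (productOverlaps s)` is the paper's `PAR_l(s)`. -/
def productOverlaps (s : (ι → α) → 𝕜) : Set ℝ :=
  (fun l => ‖∑ x, s x * conj (∏ i, l i (x i))‖ ^ 2) '' unitFamilies ι α 𝕜

lemma isCompact_productOverlaps (s : (ι → α) → 𝕜) : IsCompact (productOverlaps s) :=
  isCompact_unitFamilies.image <| .pow (.norm <| continuous_finsetSum _ fun x _ =>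
    continuous_const.mul <| RCLike.continuous_conj.comp <| by fun_prop) 2

lemma norm_sq_apply_mem_productOverlaps (s : (ι → α) → 𝕜) (x₀ : ι → α) :
    ‖s x₀‖ ^ 2 ∈ productOverlaps s := by
  classical
  exact ⟨_, single_mem_unitFamilies x₀, by simp only [prod_single_apply]; simp [Pi.single_apply]⟩

variable {s : (ι → α) → 𝕜} (hs : ∑ x, ‖s x‖ ^ 2 = 1)
include hs

lemma le_one_of_mem_productOverlaps {r : ℝ} (hr : r ∈ productOverlaps s) : r ≤ 1 := by
  obtain ⟨l, hl, rfl⟩ := hr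
  exact pow_le_one₀ (norm_nonneg _) (norm_sum_mul_conj_le_one hs (sum_norm_sq_prod_eq_one hl))

lemma one_mem_productOverlaps_iff :
    1 ∈ productOverlaps s ↔ ∃ (c : 𝕜) (l : ι → α → 𝕜),
      ‖c‖ = 1 ∧ l ∈ unitFamilies ι α 𝕜 ∧ ∀ x, s x = c * ∏ i, l i (x i) := by
  simp only [productOverlaps, Set.mem_image, pow_eq_one_iff_of_nonneg (norm_nonneg _) two_ne_zero]
  constructor
  · rintro ⟨l, hl, hl₁⟩
    obtain ⟨c, hc, rfl⟩ := (norm_sum_mul_conj_eq_one_iff hs (sum_norm_sq_prod_eq_one hl)).mp hl₁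
    exact ⟨c, l, hc, hl, fun x => rfl⟩
  · rintro ⟨c, l, hc, hl, hsl⟩
    refine ⟨l, hl, (norm_sum_mul_conj_eq_one_iff hs (sum_norm_sq_prod_eq_one hl)).mpr ⟨c, hc, ?_⟩⟩
    exact funext hsl

lemma sSup_productOverlaps_mem : sSup (productOverlaps s) ∈ productOverlaps s := by
  obtain ⟨x₀, -⟩ := exists_inv_card_le_norm_sq hs
  exact (isCompact_productOverlaps s).sSup_mem ⟨_, norm_sq_apply_mem_productOverlaps s x₀⟩

lemma sSup_productOverlaps_le_one : sSup (productOverlaps s) ≤ 1 :=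
  le_one_of_mem_productOverlaps hs (sSup_productOverlaps_mem hs)

lemma inv_card_le_sSup_productOverlaps :
    (Fintype.card (ι → α) : ℝ)⁻¹ ≤ sSup (productOverlaps s) := by
  obtain ⟨x₀, hx₀⟩ := exists_inv_card_le_norm_sq hs
  exact hx₀.trans <| le_csSup (isCompact_productOverlaps s).bddAbove
    (norm_sq_apply_mem_productOverlaps s x₀)

lemma sSup_productOverlaps_eq_one_iff : sSup (productOverlaps s) = 1 ↔ 1 ∈ productOverlaps s :=
  ⟨fun h => h ▸ sSup_productOverlaps_mem hs, fun h => (sSup_productOverlaps_le_one hs).antisymm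
    (le_csSup (isCompact_productOverlaps s).bddAbove h)⟩

end ProductOverlaps

lemma ZMod.sum_two {M : Type*} [AddCommMonoid M] (f : ZMod 2 → M) : ∑ a, f a = f 0 + f 1 :=
  Fin.sum_univ_two f

/-- For a unit vector `s ∈ ℂ^(2^n)`, `PAR_l(s) = 2^n · sup_l |⟨s,l⟩|²` over unit
product vectors `l` satisfies `1 ≤ PAR_l(s) ≤ 2^n`, with equality `PAR_l(s) = 2^n`
iff `s` is itself, up to global phase, a tensor product of unit vectors in `ℂ²`. -/
theorem stmt_9 (n : ℕ) (s : (Fin n → ZMod 2) → ℂ)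
    (hnorm : ∑ x : Fin n → ZMod 2, ‖s x‖ ^ 2 = 1)
    (PARl : ℝ)
    (hPAR : PARl = 2 ^ n * sSup { r : ℝ |
        ∃ l : Fin n → (ZMod 2 → ℂ),
          (∀ i, ‖l i 0‖ ^ 2 + ‖l i 1‖ ^ 2 = 1) ∧
          r = ‖∑ x : Fin n → ZMod 2,
                s x * (starRingEnd ℂ) (∏ i, l i (x i))‖ ^ 2 }) :
    1 ≤ PARl ∧ PARl ≤ 2 ^ n ∧
      (PARl = 2 ^ n ↔
        ∃ (c : ℂ) (l : Fin n → (ZMod 2 → ℂ)),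
          ‖c‖ = 1 ∧
          (∀ i, ‖l i 0‖ ^ 2 + ‖l i 1‖ ^ 2 = 1) ∧
          ∀ x, s x = c * ∏ i, l i (x i)) := by
  have hunit (l : Fin n → ZMod 2 → ℂ) :
      (∀ i, ‖l i 0‖ ^ 2 + ‖l i 1‖ ^ 2 = 1) ↔ l ∈ unitFamilies (Fin n) (ZMod 2) ℂ :=
    forall_congr' fun i => by rw [ZMod.sum_two]
  have hPAR' : PARl = 2 ^ n * sSup (productOverlaps s) := by
    rw [hPAR]
    congr 2
    ext r
    exact exists_congr fun l => and_congr (hunit l) ⟨fun h => h.symm, fun h => h.symm⟩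
  have hcard : (Fintype.card (Fin n → ZMod 2) : ℝ) = 2 ^ n := by simp
  have hpos : (0 : ℝ) < 2 ^ n := by positivity
  have hlower := inv_card_le_sSup_productOverlaps hnorm
  rw [hcard] at hlower
  subst hPAR'
  refine ⟨(inv_le_iff_one_le_mul₀' hpos).mp hlower,
    mul_le_of_le_one_right hpos.le (sSup_productOverlaps_le_one hnorm), ?_⟩
  rw [mul_eq_left₀ hpos.ne', sSup_productOverlaps_eq_one_iff hnorm,
    one_mem_productOverlaps_iff hnorm]
  simp only [hunit]
end

section
/- Let C ⊆ (ZMod 2)^n be a linear code of dimension k with normalized indicator s. The Schmidt measure P(s), defined as log₂ of the minimal number of nonzero entries among all states U s with U a tensor product of n unitary 2×2 matrices, satisfies P(s) ≤ min(k, n−k). -/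
/-!
With `U = 1` the state keeps its support `C`, which has `2 ^ k` elements. With `U = H ⊗ ⋯ ⊗ H`
for the Hadamard matrix `H`, the amplitude at `x` is a multiple of the character sum
`∑ y ∈ C, (-1) ^ (y ⬝ᵥ x)`, which vanishes unless `x ∈ C⊥`; since `C⊥` has dimension `n - k`, the
support then has `2 ^ (n - k)` elements.
-/

open scoped Classical

open Finset Matrix

lemma AddChar.sum_comp_eq_ite {G A R : Type*} [AddCommGroup G] [Fintype G] [AddGroup A]
    [CommRing R] [IsDomain R] {ψ : AddChar A R} (hψ : Function.Injective ψ) (f : G →+ A) :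
    ∑ g, ψ (f g) = if f = 0 then (Fintype.card G : R) else 0 := by
  have htriv : ψ.compAddMonoidHom f = 0 ↔ f = 0 := by
    simp only [DFunLike.ext_iff, AddChar.compAddMonoidHom_apply, AddChar.zero_apply,
      AddMonoidHom.zero_apply, ← ψ.map_zero_eq_one, hψ.eq_iff]
  simpa only [htriv, AddChar.compAddMonoidHom_apply] using
    AddChar.sum_eq_ite (ψ.compAddMonoidHom f)

lemma AddChar.map_sum_eq_prod_s10 {ι A M : Type*} [AddCommMonoid A] [CommMonoid M]
    (ψ : AddChar A M) (s : Finset ι) (f : ι → A) : ψ (∑ i ∈ s, f i) = ∏ i ∈ s, ψ (f i) :=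
  map_prod ψ.toMonoidHom (fun i => Multiplicative.ofAdd (f i)) s

-- Without `[DecidableEq ι]` the `Fintype (ι → d)` instance would be the classical one, which is
-- not definitionally the one used for `Fin n → ZMod 2` in the theorem.
variable {ι : Type*} [Fintype ι] [DecidableEq ι]

/-- The state `(U 0 ⊗ ⋯ ⊗ U (n-1)) s`. -/
def localTransform {d : Type*} [Fintype d] (U : ι → Matrix d d ℂ) (s : (ι → d) → ℂ)
    (x : ι → d) : ℂ :=
  ∑ y, (∏ i, U i (x i) (y i)) * s y

lemma localTransform_one {d : Type*} [Fintype d] [DecidableEq d] (s : (ι → d) → ℂ) :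
    localTransform (fun _ => 1) s = s := by
  funext x
  have hdelta : ∀ y : ι → d, ∏ i, (1 : Matrix d d ℂ) (x i) (y i) = if x = y then 1 else 0 := by
    intro y
    simp only [one_apply, prod_ite_zero, prod_const_one, funext_iff, mem_univ, true_implies]
  simp [localTransform, hdelta]

variable {N : ℕ} [NeZero N]

/-- For `N = 2` this is the Hadamard matrix. -/
noncomputable def fourierMatrix (N : ℕ) [NeZero N] : Matrix (ZMod N) (ZMod N) ℂ :=
  of fun a b => ((√N : ℝ) : ℂ)⁻¹ * ZMod.stdAddChar (a * b)

lemma fourierMatrix_mem_unitaryGroup : fourierMatrix N ∈ unitaryGroup (ZMod N) ℂ := by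
  rw [mem_unitaryGroup_iff']
  ext a c
  have hker : (∀ b : ZMod N, b * (c - a) = 0) ↔ a = c :=
    ⟨fun h => (sub_eq_zero.1 (by simpa using h 1)).symm, fun h b => by simp [h]⟩
  have horth : ∑ b : ZMod N, ZMod.stdAddChar (b * (c - a)) = if a = c then (N : ℂ) else 0 := by
    refine (AddChar.sum_comp_eq_ite ZMod.injective_stdAddChar (.mulRight (c - a))).trans ?_
    simp [AddMonoidHom.ext_iff, hker]
  have hN : ((√N : ℝ) : ℂ)⁻¹ * ((√N : ℝ) : ℂ)⁻¹ * N = 1 := by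
    rw [← mul_inv, ← Complex.ofReal_mul, Real.mul_self_sqrt (Nat.cast_nonneg N)]
    exact inv_mul_cancel₀ (by exact_mod_cast NeZero.ne N)
  calc (star (fourierMatrix N) * fourierMatrix N) a c
      = ∑ b : ZMod N, ((√N : ℝ) : ℂ)⁻¹ * ((√N : ℝ) : ℂ)⁻¹ * ZMod.stdAddChar (b * (c - a)) := by
        simp only [mul_apply, star_apply, fourierMatrix, of_apply, star_mul', star_inv₀,
          Complex.star_def, Complex.conj_ofReal, ← AddChar.map_neg_eq_conj]
        refine sum_congr rfl fun b _ => ?_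
        rw [mul_sub, sub_eq_neg_add, AddChar.map_add_eq_mul]
        ring_nf
    _ = (1 : Matrix (ZMod N) (ZMod N) ℂ) a c := by
        rw [← mul_sum, horth, one_apply]
        split_ifs <;> simp [hN]

lemma localTransform_fourierMatrix (s : (ι → ZMod N) → ℂ) (x : ι → ZMod N) :
    localTransform (fun _ => fourierMatrix N) s x =
      ((√N : ℝ) : ℂ)⁻¹ ^ Fintype.card ι * ∑ y, ZMod.stdAddChar (y ⬝ᵥ x) * s y := by
  simp only [localTransform, fourierMatrix, of_apply, prod_mul_distrib, prod_const, mul_sum,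
    dotProduct, AddChar.map_sum_eq_prod_s10, mul_comm (x _), card_univ, mul_assoc]

lemma localTransform_fourierMatrix_indicator_ne_zero_iff (C : Submodule (ZMod N) (ι → ZMod N))
    {c : ℂ} (hc : c ≠ 0) {s : (ι → ZMod N) → ℂ} (hs : ∀ y, s y = if y ∈ C then c else 0)
    (x : ι → ZMod N) :
    localTransform (fun _ => fourierMatrix N) s x ≠ 0 ↔
      x ∈ (toBilin' (1 : Matrix ι ι (ZMod N))).orthogonal C := by
  let f : C →+ ZMod N :=
    { toFun y := (y : ι → ZMod N) ⬝ᵥ x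
      map_zero' := zero_dotProduct x
      map_add' a b := add_dotProduct a b x }
  have hsum : ∑ y, ZMod.stdAddChar (y ⬝ᵥ x) * s y = (∑ y : C, ZMod.stdAddChar (f y)) * c := by
    simp only [hs, mul_ite, mul_zero, ← sum_filter, ← sum_mul]
    exact congrArg (· * c) (sum_subtype _ (by simp) _)
  rw [localTransform_fourierMatrix, hsum, AddChar.sum_comp_eq_ite ZMod.injective_stdAddChar]
  simp [hc, NeZero.ne N, f, DFunLike.ext_iff, toBilin'_apply',
    LinearMap.BilinForm.mem_orthogonal_iff]

lemma card_filter_mem_submodule {K V : Type*} [Field K] [Fintype K] [AddCommGroup V]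
    [Module K V] [Fintype V] (W : Submodule K V) :
    #{x | x ∈ W} = Fintype.card K ^ Module.finrank K W := by
  rw [← Fintype.card_subtype]
  exact Module.card_eq_pow_finrank

section Code

variable {p : ℕ} [Fact p.Prime] (C : Submodule (ZMod p) (ι → ZMod p)) {c : ℂ}
  {s : (ι → ZMod p) → ℂ}

lemma card_support_localTransform_one_indicator (hc : c ≠ 0)
    (hs : ∀ y, s y = if y ∈ C then c else 0) :
    #{x | localTransform (fun _ => 1) s x ≠ 0} = p ^ Module.finrank (ZMod p) C := by
  have hsupp : ∀ x, s x ≠ 0 ↔ x ∈ C := fun x => by simp [hs, hc]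
  rw [localTransform_one, filter_congr fun x _ => hsupp x, card_filter_mem_submodule, ZMod.card]

lemma card_support_localTransform_fourierMatrix_indicator (hc : c ≠ 0)
    (hs : ∀ y, s y = if y ∈ C then c else 0) :
    #{x | localTransform (fun _ => fourierMatrix p) s x ≠ 0} =
      p ^ (Fintype.card ι - Module.finrank (ZMod p) C) := by
  have hnondeg : (toBilin' (1 : Matrix ι ι (ZMod p))).Nondegenerate :=
    LinearMap.BilinForm.nondegenerate_toBilin'_of_det_ne_zero' 1 (by simp)
  rw [filter_congr fun x _ => localTransform_fourierMatrix_indicator_ne_zero_iff C hc hs x,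
    card_filter_mem_submodule, ZMod.card, LinearMap.BilinForm.finrank_orthogonal hnondeg,
    Module.finrank_fintype_fun_eq_card]

end Code

lemma Real.logb_natCast_sInf_le {b : ℕ} (hb : 1 < b) {S : Set ℕ} {j : ℕ} (h : b ^ j ∈ S) :
    Real.logb b (sInf S : ℕ) ≤ j := by
  rcases (sInf S).eq_zero_or_pos with h0 | h0
  · simp [h0]
  · calc Real.logb b (sInf S : ℕ) ≤ Real.logb b (b ^ j : ℕ) :=
          Real.logb_le_logb_of_le (by exact_mod_cast hb) (by exact_mod_cast h0)
            (by exact_mod_cast Nat.sInf_le h)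
      _ = j := by
          rw [Nat.cast_pow, Real.logb_pow, Real.logb_self_eq_one (by exact_mod_cast hb), mul_one]

theorem stmt_10_general (n k : ℕ)
    (C : Submodule (ZMod 2) (Fin n → ZMod 2))
    (hC : Module.finrank (ZMod 2) C = k)
    (s : (Fin n → ZMod 2) → ℂ)
    (hs : ∀ x, s x = if x ∈ C then ((Real.sqrt (2 ^ k))⁻¹ : ℝ) else 0) :
    Real.logb 2
      (sInf { m : ℕ |
        ∃ U : Fin n → Matrix (ZMod 2) (ZMod 2) ℂ,
          (∀ i, U i ∈ Matrix.unitaryGroup (ZMod 2) ℂ) ∧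
          m = (Finset.univ.filter (fun x : Fin n → ZMod 2 =>
                (∑ y : Fin n → ZMod 2, (∏ i, U i (x i) (y i)) * s y) ≠ 0)).card } : ℕ)
      ≤ min k (n - k) := by
  have hc : (((√(2 ^ k))⁻¹ : ℝ) : ℂ) ≠ 0 :=
    Complex.ofReal_ne_zero.2 (inv_ne_zero (Real.sqrt_ne_zero'.2 (by positivity)))
  have hs' : ∀ x, s x = if x ∈ C then (((√(2 ^ k))⁻¹ : ℝ) : ℂ) else 0 := fun x => by
    rw [hs, apply_ite Complex.ofReal, Complex.ofReal_zero]
  convert Real.logb_natCast_sInf_le one_lt_two ?_ using 2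
  · exact Nat.cast_ofNat.symm
  rcases min_choice k (n - k) with h | h <;> rw [h, ← hC]
  · exact ⟨fun _ => 1, fun _ => one_mem _,
      (card_support_localTransform_one_indicator C hc hs').symm⟩
  · have hcard := card_support_localTransform_fourierMatrix_indicator C hc hs'
    rw [Fintype.card_fin] at hcard
    exact ⟨fun _ => fourierMatrix 2, fun _ => fourierMatrix_mem_unitaryGroup, hcard.symm⟩

/-- The Schmidt measure (log₂ of the minimal number of nonzero entries over all
local-unitary images) of the normalized indicator state of an `[n,k]` binary
linear code is at most `min(k, n−k)`. -/
theorem stmt_10 (n k : ℕ) (hk : k ≤ n)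
    (C : Submodule (ZMod 2) (Fin n → ZMod 2))
    (hC : Module.finrank (ZMod 2) C = k)
    (s : (Fin n → ZMod 2) → ℂ)
    (hs : ∀ x, s x = if x ∈ C then ((Real.sqrt (2 ^ k))⁻¹ : ℝ) else 0) :
    Real.logb 2
      (sInf { m : ℕ |
        ∃ U : Fin n → Matrix (ZMod 2) (ZMod 2) ℂ,
          (∀ i, U i ∈ Matrix.unitaryGroup (ZMod 2) ℂ) ∧
          m = (Finset.univ.filter (fun x : Fin n → ZMod 2 =>
                (∑ y : Fin n → ZMod 2, (∏ i, U i (x i) (y i)) * s y) ≠ 0)).card } : ℕ)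
      ≤ min k (n - k) :=
  stmt_10_general n k C hC s hs
end

section
/- Let s be the normalized indicator of a linear code C ⊆ (ZMod 2)^n of dimension k, and for i < n, let s' = H(i)[s] be the result of applying the 2×2 Hadamard to qubit i. Then PAR(s')/PAR(s) ∈ {1/2, 2}, where PAR(v) = 2^n max_x |v(x)|^2. -/
open scoped Classical

/-- Lemma: applying a single-qubit Hadamard `H(i)` to the normalized indicator
state of a binary linear code either doubles or halves the PAR. -/
theorem stmt_11 (n k : ℕ) (hk : k ≤ n)
    (C : Submodule (ZMod 2) (Fin n → ZMod 2))
    (hC : Module.finrank (ZMod 2) C = k)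
    (i : Fin n)
    (s s' : (Fin n → ZMod 2) → ℝ)
    (hs : ∀ x, s x = if x ∈ C then (Real.sqrt (2 ^ k))⁻¹ else 0)
    (hs' : ∀ x, s' x = (Real.sqrt 2)⁻¹ *
        ∑ b : ZMod 2, (-1 : ℝ) ^ ((x i * b).val) * s (Function.update x i b)) :
    (2 ^ n * ⨆ x : Fin n → ZMod 2, (s' x) ^ 2)
        / (2 ^ n * ⨆ x : Fin n → ZMod 2, (s x) ^ 2) = 1 / 2 ∨
    (2 ^ n * ⨆ x : Fin n → ZMod 2, (s' x) ^ 2)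
        / (2 ^ n * ⨆ x : Fin n → ZMod 2, (s x) ^ 2) = 2 := by
  set c : ℝ := (Real.sqrt (2 ^ k))⁻¹ with hcdef
  have h2k : (0:ℝ) < 2 ^ k := by positivity
  have hc0 : 0 < c := by rw [hcdef]; positivity
  have hcsq : c ^ 2 = (2 ^ k : ℝ)⁻¹ := by
    rw [hcdef, inv_pow, Real.sq_sqrt h2k.le]
  have hsqrt2 : ((Real.sqrt 2)⁻¹:ℝ)^2 = 2⁻¹ := by
    rw [inv_pow, Real.sq_sqrt (by norm_num : (0:ℝ) ≤ 2)]
  have habs : ∀ x, |s x| ≤ c := by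
    intro x; rw [hs x]; split_ifs
    · simp [abs_of_pos hc0]
    · simpa using hc0.le
  have hbdd : ∀ x, (s x) ^ 2 ≤ (2^k:ℝ)⁻¹ := by
    intro x; rw [← hcsq, ← sq_abs]
    exact pow_le_pow_left₀ (abs_nonneg _) (habs x) 2
  have hsup_s : (⨆ x : Fin n → ZMod 2, (s x) ^ 2) = (2^k:ℝ)⁻¹ := by
    apply le_antisymm
    · exact ciSup_le hbdd
    · have h0 : s 0 ^ 2 = (2^k:ℝ)⁻¹ := by
        rw [hs 0, if_pos C.zero_mem]; exact hcsq
      rw [← h0]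
      exact le_ciSup (f := fun x : Fin n → ZMod 2 => (s x)^2) (Finite.bddAbove_range _) 0
  have huniv : (Finset.univ : Finset (ZMod 2)) = {0, 1} := by decide
  have hsum : ∀ x, s' x = (Real.sqrt 2)⁻¹ *
      (s (Function.update x i 0) + (-1:ℝ)^((x i).val) * s (Function.update x i 1)) := by
    intro x
    rw [hs' x, huniv, Finset.sum_insert (by decide), Finset.sum_singleton]
    simp
  have hupdate0 : Function.update (0 : Fin n → ZMod 2) i 0 = 0 :=
    Function.update_eq_self i (0 : Fin n → ZMod 2)
  set e : Fin n → ZMod 2 := Function.update (0 : Fin n → ZMod 2) i 1 with hedef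
  have hdiff : ∀ x : Fin n → ZMod 2,
      Function.update x i 1 = Function.update x i 0 + e := by
    intro x; funext j
    by_cases hj : j = i
    · subst hj; simp [hedef]
    · simp [Function.update_of_ne hj, hedef]
  have hεsq : ∀ x : Fin n → ZMod 2, ((-1:ℝ)^((x i).val))^2 = 1 := by
    intro x; rw [← pow_mul, mul_comm, pow_mul]; norm_num
  have hεabs : ∀ x : Fin n → ZMod 2, |(-1:ℝ)^((x i).val)| = 1 := by
    intro x; rw [abs_pow, abs_neg, abs_one, one_pow]
  have h2n : (0:ℝ) < 2 ^ n := by positivity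
  by_cases he : e ∈ C
  · -- e_i ∈ C : PAR doubles
    right
    have hub : ∀ x, (s' x)^2 ≤ 2 * (2^k:ℝ)⁻¹ := by
      intro x
      have h1 : |s' x| ≤ (Real.sqrt 2)⁻¹ * (c + c) := by
        rw [hsum x, abs_mul, abs_of_nonneg (by positivity : (0:ℝ) ≤ (Real.sqrt 2)⁻¹)]
        have h2 : |s (Function.update x i 0) + (-1:ℝ)^((x i).val) * s (Function.update x i 1)|
            ≤ c + c := by
          calc _ ≤ |s (Function.update x i 0)| + |(-1:ℝ)^((x i).val) * s (Function.update x i 1)| :=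
                abs_add_le _ _
            _ = |s (Function.update x i 0)| + |s (Function.update x i 1)| := by
                rw [abs_mul, hεabs, one_mul]
            _ ≤ c + c := add_le_add (habs _) (habs _)
        exact mul_le_mul_of_nonneg_left h2 (by positivity)
      calc (s' x)^2 = |s' x|^2 := (sq_abs _).symm
        _ ≤ ((Real.sqrt 2)⁻¹ * (c + c))^2 := pow_le_pow_left₀ (abs_nonneg _) h1 2
        _ = 2 * (2^k:ℝ)⁻¹ := by rw [mul_pow, hsqrt2, ← hcsq]; ring
    have hval0 : s' 0 ^ 2 = 2 * (2^k:ℝ)⁻¹ := by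
      have h00 : s' 0 = (Real.sqrt 2)⁻¹ * (c + c) := by
        rw [hsum 0, hupdate0, ← hedef, hs 0, if_pos C.zero_mem, hs e, if_pos he]
        norm_num
      rw [h00, mul_pow, hsqrt2, ← hcsq]; ring
    have hsupS' : (⨆ x : Fin n → ZMod 2, (s' x) ^ 2) = 2 * (2^k:ℝ)⁻¹ := by
      apply le_antisymm
      · exact ciSup_le hub
      · rw [← hval0]
        exact le_ciSup (f := fun x : Fin n → ZMod 2 => (s' x)^2) (Finite.bddAbove_range _) 0
    rw [hsupS', hsup_s]
    have h2k' : (2:ℝ)^k ≠ 0 := ne_of_gt h2k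
    have h2n' : (2:ℝ)^n ≠ 0 := ne_of_gt h2n
    field_simp
  · -- e_i ∉ C : PAR halves
    left
    have hnotboth : ∀ x, s (Function.update x i 0) * s (Function.update x i 1) = 0 := by
      intro x
      by_cases h0 : Function.update x i 0 ∈ C
      · have h1 : Function.update x i 1 ∉ C := by
          intro h1
          apply he
          have hmem := C.sub_mem h1 h0
          rw [hdiff x] at hmem
          simpa using hmem
        rw [hs (Function.update x i 1), if_neg h1, mul_zero]
      · rw [hs (Function.update x i 0), if_neg h0, zero_mul]
    have hub : ∀ x, (s' x)^2 ≤ 2⁻¹ * (2^k:ℝ)⁻¹ := by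
      intro x
      have hexp : (s' x)^2 = 2⁻¹ *
          ((s (Function.update x i 0))^2 + (s (Function.update x i 1))^2) := by
        rw [hsum x, mul_pow, hsqrt2]
        have h1 := hnotboth x
        have h2 := hεsq x
        linear_combination (2⁻¹ * (s (Function.update x i 1))^2) * h2 +
          ((-1:ℝ)^((x i).val)) * h1
      rw [hexp]
      rcases mul_eq_zero.mp (hnotboth x) with h | h
      · rw [h]
        nlinarith [hbdd (Function.update x i 1)]
      · rw [h]
        nlinarith [hbdd (Function.update x i 0)]
    have hval0 : s' 0 ^ 2 = 2⁻¹ * (2^k:ℝ)⁻¹ := by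
      have hse : s e = 0 := by rw [hs e, if_neg he]
      have h00 : s' 0 = (Real.sqrt 2)⁻¹ * c := by
        rw [hsum 0, hupdate0, ← hedef, hse, hs 0, if_pos C.zero_mem]
        norm_num
      rw [h00, mul_pow, hsqrt2, hcsq]
    have hsupS' : (⨆ x : Fin n → ZMod 2, (s' x) ^ 2) = 2⁻¹ * (2^k:ℝ)⁻¹ := by
      apply le_antisymm
      · exact ciSup_le hub
      · rw [← hval0]
        exact le_ciSup (f := fun x : Fin n → ZMod 2 => (s' x)^2) (Finite.bddAbove_range _) 0
    rw [hsupS', hsup_s]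
    have h2k' : (2:ℝ)^k ≠ 0 := ne_of_gt h2k
    have h2n' : (2:ℝ)^n ≠ 0 := ne_of_gt h2n
    field_simp
end

section
/- Let p : (ZMod 2)^n → ZMod 2 be p(x) = ∑_{0≤i<j<n} x_i x_j (the fully-connected quadratic), and let s(x) = 2^(−n/2)(−1)^(p(x)). Then s is equivalent under local unitary transformations to the GHZ state g = (e_0⊗⋯⊗e_0 + e_1⊗⋯⊗e_1)/√2: explicitly, applying to every qubit the unitary N = (1/√2)[[1,i],[1,−i]] and then to one fixed qubit the diagonal unitary diag(ω^7, ω) with ω = e^{iπ/4} maps s to g up to global phase. -/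
open scoped Classical

/-- The NegaHadamard matrix `N = (1/√2)[[1,i],[1,−i]]`, rows/columns indexed by `ZMod 2`. -/
noncomputable def negaHadamard : Matrix (ZMod 2) (ZMod 2) ℂ := fun a b =>
  ((Real.sqrt 2)⁻¹ : ℝ) * (if b = 0 then 1 else if a = 0 then Complex.I else -Complex.I)

/-- `ω = e^{iπ/4}`. -/
noncomputable def omega8 : ℂ := Complex.exp (Real.pi * Complex.I / 4)

/-- The diagonal unitary `diag(ω⁷, ω)`. -/
noncomputable def diagCorrection : Matrix (ZMod 2) (ZMod 2) ℂ := fun a b =>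
  if a = b then (if a = 0 then omega8 ^ 7 else omega8) else 0

/-!
Write `N a b = 2^{-1/2} i^b (-1)^{ab}`. The amplitude of `N^{⊗n} s` at `x` is then
`2^{-n} ∑_y i^{|y|} (-1)^{p(y)} (-1)^{x·y}`. Adding one coordinate to `y` shows that the phase
`i^{|y|} (-1)^{p(y)}` equals `(1+i)/2 + (1-i)/2 · (-1)^{|y|}`, so orthogonality of the characters of
`(ZMod 2)^n` leaves only the amplitudes `(1+i)/2` at `x = 0⋯0` and `(1-i)/2` at `x = 1⋯1`, which
`diag(ω⁷, ω)` rotates both to `1/√2`.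
-/

open Finset Complex

lemma zmod_two_eq_zero_or_one (a : ZMod 2) : a = 0 ∨ a = 1 := by
  revert a; decide

noncomputable def signChar : AddChar (ZMod 2) ℂ :=
  AddChar.zmodChar 2 (by norm_num : (-1 : ℂ) ^ 2 = 1)

lemma signChar_apply (a : ZMod 2) : signChar a = (-1) ^ a.val := AddChar.zmodChar_apply _ a

lemma signChar_isPrimitive : signChar.IsPrimitive :=
  AddChar.zmodChar_primitive_of_primitive_root 2 (IsPrimitiveRoot.neg_one 0 (by norm_num))

lemma signChar_mul_self (a : ZMod 2) : signChar a * signChar a = 1 := by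
  rw [← AddChar.map_add_eq_mul, CharTwo.add_self_eq_zero, AddChar.map_zero_eq_one]

lemma signChar_sum {ι : Type*} (s : Finset ι) (y : ι → ZMod 2) :
    signChar (∑ i ∈ s, y i) = ∏ i ∈ s, signChar (y i) := by
  induction s using Finset.cons_induction with
  | empty => simp
  | cons k s hk ih => rw [sum_cons, prod_cons, AddChar.map_add_eq_mul, ih]

lemma sum_prod_signChar_mul {ι : Type*} [Fintype ι] [DecidableEq ι] (c : ι → ZMod 2) :
    ∑ y : ι → ZMod 2, ∏ i, signChar (y i * c i)
      = if ∀ i, c i = 0 then 2 ^ Fintype.card ι else 0 := by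
  rw [← Fintype.prod_sum fun i (b : ZMod 2) => signChar (b * c i)]
  simp_rw [AddChar.sum_mulShift _ signChar_isPrimitive]
  simp [prod_ite_zero]

section FullQuadratic

variable {ι : Type*} [LinearOrder ι]

def fullQuadratic (s : Finset ι) (y : ι → ZMod 2) : ZMod 2 :=
  ∑ i ∈ s, ∑ j ∈ s with i < j, y i * y j

lemma fullQuadratic_cons (k : ι) (s : Finset ι) (hk : k ∉ s) (y : ι → ZMod 2) :
    fullQuadratic (cons k s hk) y = fullQuadratic s y + y k * ∑ j ∈ s, y j := by
  have cross : ∑ j ∈ s, ((if k < j then y k * y j else 0) + if j < k then y j * y k else 0)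
      = y k * ∑ j ∈ s, y j := by
    rw [mul_sum]
    refine sum_congr rfl fun j hj => ?_
    rcases (ne_of_mem_of_not_mem hj hk).lt_or_gt with h | h
    · simp [h, h.not_gt, mul_comm]
    · simp [h, h.not_gt]
  simp only [fullQuadratic, sum_filter, sum_cons, lt_irrefl, if_false, zero_add,
    sum_add_distrib] at cross ⊢
  linear_combination cross

lemma prod_I_pow_mul_signChar_fullQuadratic (s : Finset ι) (y : ι → ZMod 2) :
    (∏ i ∈ s, I ^ (y i).val) * signChar (fullQuadratic s y)
      = (1 + I) / 2 + (1 - I) / 2 * signChar (∑ i ∈ s, y i) := by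
  induction s using Finset.cons_induction with
  | empty =>
    simp only [prod_empty, sum_empty, fullQuadratic, AddChar.map_zero_eq_one]
    ring
  | cons k s hk ih =>
    rw [prod_cons, fullQuadratic_cons, sum_cons, AddChar.map_add_eq_mul]
    set σ := signChar (∑ j ∈ s, y j)
    rcases zmod_two_eq_zero_or_one (y k) with hy | hy <;>
      simp only [hy, ZMod.val_zero, ZMod.val_one, pow_zero, pow_one, zero_mul, zero_add,
        AddChar.map_zero_eq_one, mul_one, one_mul] at ih ⊢
    · exact ih
    · have hσ : signChar (1 + ∑ j ∈ s, y j) = -σ := by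
        rw [AddChar.map_add_eq_mul, signChar_apply, ZMod.val_one, pow_one, neg_one_mul]
      rw [hσ]
      linear_combination (I * σ) * ih + (1 + I) / 2 * signChar_mul_self (∑ j ∈ s, y j)
        + (σ - σ * σ) / 2 * I_sq

end FullQuadratic

lemma negaHadamard_apply (a b : ZMod 2) :
    negaHadamard a b = ((Real.sqrt 2)⁻¹ : ℝ) * I ^ b.val * signChar (a * b) := by
  rcases zmod_two_eq_zero_or_one a with rfl | rfl <;>
    rcases zmod_two_eq_zero_or_one b with rfl | rfl <;>
    simp [negaHadamard, signChar_apply, ZMod.val_one]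

lemma diagCorrection_eq_diagonal :
    diagCorrection = Matrix.diagonal fun a => if a = 0 then omega8 ^ 7 else omega8 := by
  ext a b
  simp [diagCorrection, Matrix.diagonal_apply]

lemma ofReal_sqrt_two_sq : ((Real.sqrt 2 : ℝ) : ℂ) ^ 2 = 2 := by
  rw [← ofReal_pow, Real.sq_sqrt zero_le_two]
  norm_num

lemma one_add_I_eq : 1 + I = ((Real.sqrt 2 : ℝ) : ℂ) * omega8 := by
  have h : (Real.pi : ℂ) * I / 4 = ((Real.pi / 4 : ℝ) : ℂ) * I := by push_cast; ring
  rw [omega8, h, exp_mul_I, ← ofReal_cos, ← ofReal_sin, Real.cos_pi_div_four,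
    Real.sin_pi_div_four]
  push_cast
  linear_combination -(1 + I) / 2 * ofReal_sqrt_two_sq

lemma omega8_pow_eight : omega8 ^ 8 = 1 := by
  rw [omega8, ← exp_nat_mul, ← exp_two_pi_mul_I]
  congr 1
  push_cast
  ring

lemma omega8_pow_seven_mul : omega8 ^ 7 * ((1 + I) / 2) = (((Real.sqrt 2)⁻¹ : ℝ) : ℂ) := by
  calc omega8 ^ 7 * ((1 + I) / 2) = omega8 ^ 8 * ((Real.sqrt 2 : ℝ) / 2) := by
        rw [one_add_I_eq]; ring
    _ = (((Real.sqrt 2)⁻¹ : ℝ) : ℂ) := by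
        rw [omega8_pow_eight]; push_cast; field_simp; linear_combination ofReal_sqrt_two_sq

lemma omega8_mul : omega8 * ((1 - I) / 2) = (((Real.sqrt 2)⁻¹ : ℝ) : ℂ) := by
  push_cast
  field_simp
  linear_combination (1 - I) * one_add_I_eq.symm - I_sq

lemma prod_ite_diagCorrection_mul {ι : Type*} [Fintype ι] [DecidableEq ι] (f : ι)
    (M : Matrix (ZMod 2) (ZMod 2) ℂ) (x y : ι → ZMod 2) :
    ∏ i, (if i = f then diagCorrection * M else M) (x i) (y i)
      = (if x f = 0 then omega8 ^ 7 else omega8) * ∏ i, M (x i) (y i) := by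
  rw [← mul_prod_erase _ _ (mem_univ f),
    ← mul_prod_erase _ (fun i => M (x i) (y i)) (mem_univ f), if_pos rfl,
    diagCorrection_eq_diagonal, Matrix.diagonal_mul, mul_assoc]
  congr 2
  exact prod_congr rfl fun i hi => by rw [if_neg (ne_of_mem_erase hi)]

lemma prod_negaHadamard_apply {ι : Type*} [Fintype ι] (x y : ι → ZMod 2) :
    ∏ i, negaHadamard (x i) (y i) = (((Real.sqrt 2)⁻¹ : ℝ) : ℂ) ^ Fintype.card ι
      * (∏ i, I ^ (y i).val) * ∏ i, signChar (y i * x i) := by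
  simp_rw [negaHadamard_apply, prod_mul_distrib, prod_const, card_univ, mul_comm (x _)]

lemma sum_prod_negaHadamard_mul_signChar_fullQuadratic {ι : Type*} [Fintype ι] [LinearOrder ι]
    (x : ι → ZMod 2) :
    ∑ y : ι → ZMod 2, (∏ i, negaHadamard (x i) (y i)) * signChar (fullQuadratic univ y)
      = ((Real.sqrt 2 : ℝ) : ℂ) ^ Fintype.card ι * ((1 + I) / 2 * (if ∀ i, x i = 0 then 1 else 0)
          + (1 - I) / 2 * (if ∀ i, x i = 1 then 1 else 0)) := by
  set r : ℂ := (((Real.sqrt 2)⁻¹ : ℝ) : ℂ) ^ Fintype.card ι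
  have hy (y : ι → ZMod 2) : (∏ i, negaHadamard (x i) (y i)) * signChar (fullQuadratic univ y)
      = r * ((1 + I) / 2 * ∏ i, signChar (y i * x i)
          + (1 - I) / 2 * ∏ i, signChar (y i * (x i + 1))) := by
    have hshift : ∏ i, signChar (y i * (x i + 1))
        = (∏ i, signChar (y i * x i)) * ∏ i, signChar (y i) := by
      simp_rw [mul_add, mul_one, AddChar.map_add_eq_mul, prod_mul_distrib]
    have key := prod_I_pow_mul_signChar_fullQuadratic univ y
    rw [signChar_sum] at key
    rw [prod_negaHadamard_apply, hshift]
    linear_combination r * (∏ i, signChar (y i * x i)) * key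
  have hr : r * 2 ^ Fintype.card ι = ((Real.sqrt 2 : ℝ) : ℂ) ^ Fintype.card ι := by
    have h : (((Real.sqrt 2)⁻¹ : ℝ) : ℂ) * 2 = (Real.sqrt 2 : ℝ) := by
      push_cast
      field_simp
      linear_combination -ofReal_sqrt_two_sq
    rw [← mul_pow, h]
  have hone : ∀ c : ZMod 2, c + 1 = 0 ↔ c = 1 := by decide
  simp_rw [hy, ← mul_sum, sum_add_distrib, ← mul_sum, sum_prod_signChar_mul, hone]
  rw [← mul_boole _ ((2 : ℂ) ^ Fintype.card ι), ← mul_boole _ ((2 : ℂ) ^ Fintype.card ι)]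
  linear_combination ((1 + I) / 2 * (if ∀ i, x i = 0 then 1 else 0)
    + (1 - I) / 2 * (if ∀ i, x i = 1 then 1 else 0)) * hr

lemma ite_omega8_mul_ghz {ι : Type*} (f : ι) (x : ι → ZMod 2) :
    (if x f = 0 then omega8 ^ 7 else omega8) * ((1 + I) / 2 * (if ∀ i, x i = 0 then 1 else 0)
        + (1 - I) / 2 * (if ∀ i, x i = 1 then 1 else 0))
      = if (∀ i, x i = 0) ∨ (∀ i, x i = 1) then (((Real.sqrt 2)⁻¹ : ℝ) : ℂ) else 0 := by
  by_cases h0 : ∀ i, x i = 0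
  · have h1 : ¬ ∀ i, x i = 1 := fun h1 => zero_ne_one ((h0 f).symm.trans (h1 f))
    rw [if_pos (h0 f), if_pos h0, if_neg h1, if_pos (Or.inl h0)]
    linear_combination omega8_pow_seven_mul
  · by_cases h1 : ∀ i, x i = 1
    · rw [if_neg (by rw [h1 f]; exact one_ne_zero), if_neg h0, if_pos h1, if_pos (Or.inr h1)]
      linear_combination omega8_mul
    · rw [if_neg h0, if_neg h1, if_neg (not_or.2 ⟨h0, h1⟩)]
      ring

lemma sqrt_two_pow (n : ℕ) : Real.sqrt (2 ^ n) = Real.sqrt 2 ^ n := by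
  rw [Real.sqrt_eq_iff_mul_self_eq_of_pos (by positivity), ← mul_pow,
    Real.mul_self_sqrt zero_le_two]

theorem stmt_15_general (n : ℕ) (f : Fin n)
    (s g : (Fin n → ZMod 2) → ℂ)
    (hs : ∀ x, s x = ((Real.sqrt (2 ^ n))⁻¹ : ℝ) *
      (-1 : ℂ) ^ ((∑ i : Fin n, ∑ j ∈ Finset.univ.filter (fun j => i < j),
        x i * x j).val))
    (hg : ∀ x, g x =
      if (∀ i, x i = 0) ∨ (∀ i, x i = 1) then ((Real.sqrt 2)⁻¹ : ℝ) else 0) :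
    ∃ c : ℂ, ‖c‖ = 1 ∧
      ∀ x, (∑ y : Fin n → ZMod 2,
          (∏ i, (if i = f then diagCorrection * negaHadamard else negaHadamard)
            (x i) (y i)) * s y)
        = c * g x := by
  refine ⟨1, norm_one, fun x => ?_⟩
  have hs' (y : Fin n → ZMod 2) :
      s y = (((Real.sqrt 2 : ℝ) : ℂ) ^ n)⁻¹ * signChar (fullQuadratic univ y) := by
    rw [hs, signChar_apply, sqrt_two_pow]
    push_cast
    rfl
  calc ∑ y : Fin n → ZMod 2,
          (∏ i, (if i = f then diagCorrection * negaHadamard else negaHadamard)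
            (x i) (y i)) * s y
      = (if x f = 0 then omega8 ^ 7 else omega8) * ((((Real.sqrt 2 : ℝ) : ℂ) ^ n)⁻¹ *
          ∑ y : Fin n → ZMod 2,
            (∏ i, negaHadamard (x i) (y i)) * signChar (fullQuadratic univ y)) := by
        simp_rw [prod_ite_diagCorrection_mul, hs', mul_sum]
        exact sum_congr rfl fun y _ => by ring
    _ = 1 * g x := by
        have h0 : ((Real.sqrt 2 : ℝ) : ℂ) ≠ 0 := by simp
        rw [sum_prod_negaHadamard_mul_signChar_fullQuadratic, Fintype.card_fin,
          inv_mul_cancel_left₀ (pow_ne_zero n h0), hg, one_mul, apply_ite ((↑) : ℝ → ℂ),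
          ofReal_zero]
        convert ite_omega8_mul_ghz f x

/-- The fully-connected quadratic phase state `s = 2^{−n/2}(−1)^{∑_{i<j} x_i x_j}`
is mapped, by applying `N` to every qubit followed by `diag(ω⁷,ω)` on one fixed
qubit `f`, to the GHZ state up to a global phase. -/
theorem stmt_15 (n : ℕ) (hn : 1 ≤ n) (f : Fin n)
    (s g : (Fin n → ZMod 2) → ℂ)
    (hs : ∀ x, s x = ((Real.sqrt (2 ^ n))⁻¹ : ℝ) *
      (-1 : ℂ) ^ ((∑ i : Fin n, ∑ j ∈ Finset.univ.filter (fun j => i < j),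
        x i * x j).val))
    (hg : ∀ x, g x =
      if (∀ i, x i = 0) ∨ (∀ i, x i = 1) then ((Real.sqrt 2)⁻¹ : ℝ) else 0) :
    ∃ c : ℂ, ‖c‖ = 1 ∧
      ∀ x, (∑ y : Fin n → ZMod 2,
          (∏ i, (if i = f then diagCorrection * negaHadamard else negaHadamard)
            (x i) (y i)) * s y)
        = c * g x :=
  stmt_15_general n f s g hs hg
end

section
/- Let s(x) = 2^(−n/2)(−1)^(p(x)) with p(x) = x_{π(0)}x_{π(1)} + x_{π(1)}x_{π(2)} + ⋯ + x_{π(n−2)}x_{π(n−1)} for a permutation π of {0,...,n−1}. Then the maximal squared overlap of s with computational-basis-aligned product states obtained by applying Hadamards to any subset T of qubits satisfies: max over T and x of 2^n |(∏_{i∈T}H(i) s)(x)|^2 = 2^{⌈n/2⌉}. -/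
/-!
Relabel the qubits by `π`, so that the phase is the standard path form `q(z) = ∑ zᵢ zᵢ₊₁`.
Up to the factor `2^{-|T|/2}`, the amplitude `2^{n/2} (∏_{i∈T} H(i) s)(x)` is then an
exponential sum `∑ (-1)^{q(z) + c⬝z}` over the affine coset `{z | z = b off S}`, `|S| = |T|`.
Sum out the first coordinate `z₀`. If `0 ∉ S` it is fixed and `z₀ z₁` becomes a linear term,
leaving a sum of the same absolute value on the remaining path. If `0 ∈ S` the sum over `z₀` is
a character sum, equal to `2` when `z₁ = c₀` and to `0` otherwise, so one coordinate is freed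
and the next one fixed. So every factor `2` in the sum is paid for by two vertices, one of them
in `S`, and induction gives `sum² ≤ 2^{|S| + ⌈n/2⌉}` (with `⌊n/2⌋` when the first vertex is not
in `S`). Equality holds for `S` the even vertices and `x = 0`, because `q` vanishes on a coset
supported on an independent set.
-/

open Finset Fintype Matrix

noncomputable def bitSign (a : ZMod 2) : ℝ := (-1) ^ a.val

lemma bitSign_add (a b : ZMod 2) : bitSign (a + b) = bitSign a * bitSign b := by
  rw [bitSign, bitSign, bitSign, ← pow_add, ZMod.val_add, ← neg_one_pow_eq_pow_mod_two]

lemma abs_bitSign (a : ZMod 2) : |bitSign a| = 1 := by simp [bitSign]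

lemma sum_bitSign_mul (u : ZMod 2) :
    ∑ a : ZMod 2, bitSign (a * u) = if u = 0 then 2 else 0 := by
  obtain rfl | rfl : u = 0 ∨ u = 1 := by decide +revert
  · simp [bitSign]
  · rw [show (univ : Finset (ZMod 2)) = {0, 1} from rfl, sum_pair zero_ne_one]
    simp [bitSign, ZMod.val_one]

section AffineCoset

variable {ι κ α : Type*} [Fintype ι] [DecidableEq ι] [Fintype α]

def affineCoset (S : Finset ι) (b : ι → α) : Finset (ι → α) :=
  piFinset fun j => if j ∈ S then univ else {b j}

lemma mem_affineCoset {S : Finset ι} {b z : ι → α} :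
    z ∈ affineCoset S b ↔ ∀ j ∉ S, z j = b j := by
  simp only [affineCoset, mem_piFinset]
  refine forall_congr' fun j => ?_
  split_ifs with h <;> simp [h]

lemma card_affineCoset (S : Finset ι) (b : ι → α) :
    #(affineCoset S b) = Fintype.card α ^ #S := by
  simp [affineCoset, card_piFinset, apply_ite Finset.card]

lemma filter_affineCoset_apply_eq [DecidableEq α] (S : Finset ι) (b : ι → α) (i : ι)
    (v : α) :
    {z ∈ affineCoset S b | z i = v} =
      if i ∈ S ∨ b i = v then affineCoset (S.erase i) (Function.update b i v) else ∅ := by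
  ext z
  split_ifs with h
  · simp only [mem_filter, mem_affineCoset]
    constructor
    · rintro ⟨hz, rfl⟩ j hj
      rcases eq_or_ne j i with rfl | hji
      · simp
      · rw [Function.update_of_ne hji]
        exact hz j fun hjS => hj (mem_erase.2 ⟨hji, hjS⟩)
    · intro hz
      have hi : z i = v := by simpa using hz i (notMem_erase i S)
      refine ⟨fun j hj => ?_, hi⟩
      rcases eq_or_ne j i with rfl | hji
      · rw [hi, h.resolve_left hj]
      · simpa [Function.update_of_ne hji] using hz j fun hm => hj (mem_of_mem_erase hm)
  · simp only [not_or] at h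
    simp only [mem_filter, mem_affineCoset, notMem_empty, iff_false, not_and]
    intro hz hi
    exact h.2 (hz i h.1 ▸ hi)

variable [Fintype κ] [DecidableEq κ]

lemma sum_affineCoset_comp_equiv {M : Type*} [AddCommMonoid M] (e : ι ≃ κ) (S : Finset κ)
    (b : κ → α) (f : (κ → α) → M) :
    ∑ y ∈ affineCoset S b, f y =
      ∑ z ∈ affineCoset (S.map e.symm.toEmbedding) (b ∘ e), f (z ∘ e.symm) := by
  refine sum_nbij' (· ∘ e) (· ∘ e.symm) ?_ ?_ ?_ ?_ ?_ <;>
    simp only [mem_affineCoset, mem_map_equiv, Equiv.symm_symm, Function.comp_apply]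
  · exact fun y hy j hj => hy _ hj
  · exact fun z hz j hj => by simpa using hz (e.symm j) (by simpa using hj)
  all_goals simp [Function.comp_assoc]

end AffineCoset

def finsetTail {n : ℕ} (S : Finset (Fin (n + 1))) : Finset (Fin n) := {i | i.succ ∈ S}

@[simp] lemma mem_finsetTail {n : ℕ} {S : Finset (Fin (n + 1))} {i : Fin n} :
    i ∈ finsetTail S ↔ i.succ ∈ S := by
  simp [finsetTail]

lemma card_finsetTail {n : ℕ} (S : Finset (Fin (n + 1))) :
    #S = #(finsetTail S) + if 0 ∈ S then 1 else 0 := by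
  have := Fin.card_filter_univ_succ' (· ∈ S)
  rw [filter_mem_eq_inter, univ_inter] at this
  rw [this, add_comm]
  rfl

lemma sum_affineCoset_fin_succ {n : ℕ} {α M : Type*} [Fintype α] [AddCommMonoid M]
    (S : Finset (Fin (n + 1))) (b : Fin (n + 1) → α) (f : (Fin (n + 1) → α) → M) :
    ∑ z ∈ affineCoset S b, f z =
      ∑ a ∈ (if 0 ∈ S then univ else {b 0}),
        ∑ w ∈ affineCoset (finsetTail S) (Fin.tail b), f (Fin.cons a w) := by
  have := filter_piFinset_eq_map_consEquiv (fun j => if j ∈ S then univ else {b j})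
    (fun _ => True)
  rw [filter_true, filter_true] at this
  rw [affineCoset, this, sum_map, sum_product]
  refine sum_congr rfl fun a _ => sum_congr ?_ fun w _ => rfl
  ext w
  simp [affineCoset, Fin.tail]

def pathForm {n : ℕ} (z : Fin n → ZMod 2) : ZMod 2 :=
  ∑ i : Fin (n - 1),
    z ⟨i, i.isLt.trans_le (n.sub_le 1)⟩ * z ⟨i + 1, Nat.add_lt_of_lt_sub i.isLt⟩

lemma pathForm_cons {m : ℕ} (a : ZMod 2) (w : Fin (m + 1) → ZMod 2) :
    pathForm (Fin.cons a w : Fin (m + 2) → ZMod 2) = a * w 0 + pathForm w := by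
  have hcons : ∀ k (hk : k + 1 < m + 2),
      (Fin.cons a w : Fin (m + 2) → ZMod 2) ⟨k + 1, hk⟩ = w ⟨k, by omega⟩ :=
    fun k _ => Fin.cons_succ (α := fun _ => ZMod 2) a w ⟨k, by omega⟩
  simp only [pathForm, Nat.add_one_sub_one, hcons, Fin.eta, Fin.sum_univ_succ,
    Fin.coe_ofNat_eq_mod, Nat.zero_mod, Fin.zero_eta, Fin.cons_zero, Fin.val_succ, add_right_inj]
  rfl

lemma dotProduct_fin_cons {n : ℕ} {R : Type*} [CommSemiring R] (c : Fin (n + 1) → R) (a : R)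
    (w : Fin n → R) :
    c ⬝ᵥ Fin.cons a w = c 0 * a + Fin.tail c ⬝ᵥ w :=
  dotProduct_cons c a w

noncomputable def pathSum {n : ℕ} (S : Finset (Fin n)) (b c : Fin n → ZMod 2) : ℝ :=
  ∑ z ∈ affineCoset S b, bitSign (pathForm z + c ⬝ᵥ z)

lemma abs_pathSum_le {n : ℕ} (S : Finset (Fin n)) (b c : Fin n → ZMod 2) :
    |pathSum S b c| ≤ 2 ^ #S :=
  calc |pathSum S b c| ≤ ∑ z ∈ affineCoset S b, |bitSign (pathForm z + c ⬝ᵥ z)| :=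
        abs_sum_le_sum_abs _ _
    _ = 2 ^ #S := by simp [abs_bitSign, card_affineCoset]

section Recursion

variable {m : ℕ} {S : Finset (Fin (m + 2))} (b c : Fin (m + 2) → ZMod 2)

lemma pathSum_of_zero_notMem (h : 0 ∉ S) :
    pathSum S b c = bitSign (c 0 * b 0) *
      pathSum (finsetTail S) (Fin.tail b) (Fin.tail c + Pi.single 0 (b 0)) := by
  rw [pathSum, sum_affineCoset_fin_succ, if_neg h, sum_singleton, pathSum, mul_sum]
  refine sum_congr rfl fun w _ => ?_
  rw [← bitSign_add, pathForm_cons, dotProduct_fin_cons, add_dotProduct, single_dotProduct]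
  ring_nf

lemma pathSum_of_zero_mem (h : 0 ∈ S) :
    pathSum S b c = if 0 ∈ finsetTail S ∨ Fin.tail b 0 = c 0 then
      2 * pathSum ((finsetTail S).erase 0) (Function.update (Fin.tail b) 0 (c 0)) (Fin.tail c)
      else 0 := by
  have hsum : pathSum S b c =
      2 * ∑ w ∈ {w ∈ affineCoset (finsetTail S) (Fin.tail b) | w 0 = c 0},
        bitSign (pathForm w + Fin.tail c ⬝ᵥ w) := by
    rw [pathSum, sum_affineCoset_fin_succ, if_pos h, sum_comm, sum_filter, mul_sum]
    refine sum_congr rfl fun w _ => ?_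
    have hsplit : ∀ a, pathForm (Fin.cons a w : Fin (m + 2) → ZMod 2) + c ⬝ᵥ Fin.cons a w
        = a * (w 0 + c 0) + (pathForm w + Fin.tail c ⬝ᵥ w) := fun a => by
      rw [pathForm_cons, dotProduct_fin_cons]; ring
    simp_rw [hsplit, bitSign_add, ← sum_mul, sum_bitSign_mul, CharTwo.add_eq_zero]
    split_ifs <;> simp
  rw [hsum, filter_affineCoset_apply_eq]
  split_ifs <;> simp [pathSum]

end Recursion

lemma sq_pathSum_le_of_le_one {n : ℕ} (hn : n ≤ 1) (S : Finset (Fin n))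
    (b c : Fin n → ZMod 2) :
    pathSum S b c ^ 2 ≤ 2 ^ (#S + (n + 1) / 2) ∧
      ((∀ i ∈ S, (i : ℕ) ≠ 0) → pathSum S b c ^ 2 ≤ 2 ^ (#S + n / 2)) := by
  have hsq : pathSum S b c ^ 2 ≤ 2 ^ (2 * #S) := by
    rw [pow_mul', ← sq_abs]
    exact pow_le_pow_left₀ (abs_nonneg _) (abs_pathSum_le S b c) 2
  have hcard : #S ≤ n := by simpa using card_le_univ S
  refine ⟨hsq.trans (pow_le_pow_right₀ one_le_two (by omega)), fun hS => ?_⟩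
  have hempty : #S = 0 :=
    card_eq_zero.2 <| eq_empty_of_forall_notMem fun i hi => hS i hi (by omega)
  exact hsq.trans (pow_le_pow_right₀ one_le_two (by omega))

theorem sq_pathSum_le : ∀ {n : ℕ} (S : Finset (Fin n)) (b c : Fin n → ZMod 2),
    pathSum S b c ^ 2 ≤ 2 ^ (#S + (n + 1) / 2) ∧
      ((∀ i ∈ S, (i : ℕ) ≠ 0) → pathSum S b c ^ 2 ≤ 2 ^ (#S + n / 2))
  | 0, S, b, c => sq_pathSum_le_of_le_one zero_le_one S b c
  | 1, S, b, c => sq_pathSum_le_of_le_one le_rfl S b c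
  | m + 2, S, b, c => by
    have hcard := card_finsetTail S
    by_cases h : 0 ∈ S
    · refine ⟨?_, fun hS => absurd rfl (hS 0 h)⟩
      rw [if_pos h] at hcard
      rw [pathSum_of_zero_mem b c h]
      split_ifs
      · set S' := (finsetTail S).erase 0
        have hS' : ∀ i ∈ S', (i : ℕ) ≠ 0 := fun i hi =>
          Fin.val_ne_of_ne (ne_of_mem_erase hi)
        have hle := (sq_pathSum_le S' (Function.update (Fin.tail b) 0 (c 0)) (Fin.tail c)).2 hS'
        have hcard' : #S' ≤ #(finsetTail S) := card_erase_le
        calc (2 * pathSum S' _ _) ^ 2 = 2 ^ 2 * pathSum S' _ _ ^ 2 := by ring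
          _ ≤ 2 ^ 2 * 2 ^ (#S' + (m + 1) / 2) := by gcongr
          _ ≤ 2 ^ (#S + (m + 2 + 1) / 2) := by
            rw [← pow_add]; exact pow_le_pow_right₀ one_le_two (by omega)
      · rw [sq, zero_mul]
        positivity
    · rw [if_neg h, add_zero] at hcard
      have hle : pathSum S b c ^ 2 ≤ 2 ^ (#S + (m + 2) / 2) := by
        rw [pathSum_of_zero_notMem b c h, mul_pow, ← sq_abs (bitSign _), abs_bitSign, one_pow,
          one_mul, hcard]
        exact (sq_pathSum_le _ _ _).1
      exact ⟨hle.trans (pow_le_pow_right₀ one_le_two (by omega)), fun _ => hle⟩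

def evenVertices (n : ℕ) : Finset (Fin n) :=
  univ.image fun k : Fin ((n + 1) / 2) => ⟨2 * k, by omega⟩

lemma card_evenVertices (n : ℕ) : #(evenVertices n) = (n + 1) / 2 := by
  rw [evenVertices, card_image_of_injective _ fun k l h => by simpa [Fin.ext_iff] using h]
  simp

lemma pathSum_zero_zero {n : ℕ} {S : Finset (Fin n)}
    (hS : ∀ i j : Fin n, (j : ℕ) = i + 1 → i ∈ S → j ∉ S) :
    pathSum S 0 0 = 2 ^ #S := by
  have hform : ∀ z ∈ affineCoset S 0, pathForm z = 0 := fun z hz => by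
    rw [mem_affineCoset] at hz
    refine sum_eq_zero fun i _ => ?_
    by_cases hi : (⟨i, by omega⟩ : Fin n) ∈ S
    · rw [hz ⟨i + 1, by omega⟩ (hS _ _ rfl hi), Pi.zero_apply, mul_zero]
    · rw [hz _ hi, Pi.zero_apply, zero_mul]
  rw [pathSum, Finset.sum_congr rfl fun z hz => by rw [hform z hz, zero_dotProduct, add_zero]]
  simp [bitSign, card_affineCoset]

lemma evenVertices_independent (n : ℕ) (i j : Fin n) (hij : (j : ℕ) = i + 1)
    (hi : i ∈ evenVertices n) : j ∉ evenVertices n := by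
  simp only [evenVertices, mem_image, mem_univ, true_and, Fin.ext_iff] at hi ⊢
  obtain ⟨k, hk⟩ := hi
  rintro ⟨l, hl⟩
  omega

lemma hadamard_sum_eq_pathSum {n : ℕ} (π : Equiv.Perm (Fin n)) (T : Finset (Fin n))
    (x : Fin n → ZMod 2) :
    ∑ y : Fin n → ZMod 2, (if ∀ j ∉ T, y j = x j then bitSign (∑ i ∈ T, x i * y i) else 0) *
        bitSign (pathForm (y ∘ π)) =
      pathSum (T.map π.symm.toEmbedding) (x ∘ π) ((fun i => if i ∈ T then x i else 0) ∘ π) := by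
  have hcoset : affineCoset T x = ({y | ∀ j ∉ T, y j = x j} : Finset _) := by
    ext y; simp [mem_affineCoset]
  have hlin : ∀ y : Fin n → ZMod 2,
      ∑ i ∈ T, x i * y i = (fun i => if i ∈ T then x i else 0) ⬝ᵥ y := fun y => by
    simp [dotProduct, ite_mul]
  simp_rw [ite_mul, zero_mul, ← sum_filter, ← hcoset, ← bitSign_add, hlin]
  rw [pathSum, sum_affineCoset_comp_equiv π]
  refine Finset.sum_congr rfl fun z _ => ?_
  rw [Function.comp_assoc, Equiv.symm_comp_self, Function.comp_id, dotProduct_comp_equiv_symm,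
    add_comm]

lemma two_pow_mul_sq_eq (n k : ℕ) (G : ℝ) :
    2 ^ n * ((√2)⁻¹ ^ k * (√(2 ^ n))⁻¹ * G) ^ 2 = G ^ 2 / 2 ^ k := by
  have h2 : √2 ^ 2 = 2 := Real.sq_sqrt zero_le_two
  have h2n : √(2 ^ n) ^ 2 = 2 ^ n := Real.sq_sqrt (by positivity)
  have h2k : ((√2)⁻¹ ^ k) ^ 2 = (2 ^ k)⁻¹ := by
    rw [← pow_mul, mul_comm, pow_mul, inv_pow, h2, inv_pow]
  rw [mul_pow, mul_pow, h2k, inv_pow, h2n]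
  field_simp

/-- For the line ("path") quadratic phase state
`s = 2^{−n/2}(−1)^{x_{π(0)}x_{π(1)} + ⋯ + x_{π(n−2)}x_{π(n−1)}}`, the maximum over
all subsets `T` of qubits receiving Hadamards and all positions `x` of
`2^n |(∏_{i∈T} H(i) s)(x)|²` equals `2^{⌈n/2⌉}`. -/
theorem stmt_16 (n : ℕ) (π : Equiv.Perm (Fin n))
    (s : (Fin n → ZMod 2) → ℝ)
    (hs : ∀ x, s x = (Real.sqrt (2 ^ n))⁻¹ *
      (-1 : ℝ) ^ ((∑ i : Fin (n - 1),
        x (π ⟨i.val, by omega⟩) * x (π ⟨i.val + 1, by omega⟩)).val))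
    (F : Finset (Fin n) → (Fin n → ZMod 2) → ℝ)
    (hF : ∀ T x, F T x = ((Real.sqrt 2)⁻¹) ^ T.card *
      ∑ y : Fin n → ZMod 2,
        (if ∀ j ∉ T, y j = x j
          then (-1 : ℝ) ^ ((∑ i ∈ T, x i * y i).val) else 0) * s y) :
    (⨆ T : Finset (Fin n), ⨆ x : Fin n → ZMod 2, (2 : ℝ) ^ n * (F T x) ^ 2)
      = 2 ^ ((n + 1) / 2) := by
  have hFT : ∀ T x, F T x = (√2)⁻¹ ^ #T * (√(2 ^ n))⁻¹ *
      pathSum (T.map π.symm.toEmbedding) (x ∘ π) ((fun i => if i ∈ T then x i else 0) ∘ π) :=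
    fun T x => by
      rw [hF, ← hadamard_sum_eq_pathSum, mul_assoc]
      congr 1
      rw [Finset.mul_sum]
      refine Finset.sum_congr rfl fun y _ => ?_
      rw [hs, mul_left_comm]
      rfl
  refine le_antisymm (ciSup_le fun T => ciSup_le fun x => ?_) ?_
  · rw [hFT, two_pow_mul_sq_eq, div_le_iff₀ (by positivity), ← pow_add, add_comm]
    simpa using (sq_pathSum_le (T.map π.symm.toEmbedding) _ _).1
  · refine le_ciSup_of_le (Finite.bddAbove_range _) ((evenVertices n).map π.toEmbedding)
      (le_ciSup_of_le (Finite.bddAbove_range _) 0 ?_)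
    have hT : ((evenVertices n).map π.toEmbedding).map π.symm.toEmbedding = evenVertices n := by
      ext; simp
    rw [hFT, two_pow_mul_sq_eq, hT, card_map]
    simp only [Pi.zero_apply, ite_self]
    rw [show (0 : Fin n → ZMod 2) ∘ π = 0 from rfl,
      show (fun _ => 0 : Fin n → ZMod 2) ∘ π = 0 from rfl,
      pathSum_zero_zero (evenVertices_independent n), card_evenVertices, sq,
      mul_div_cancel_right₀ _ (by positivity)]
end

section
/- Let C ⊆ (ZMod 2)^n be a linear code, s its normalized indicator, Q ⊆ {0,...,n−1}, and s' = ∏_{t∈Q} H(t)[s]. Then PAR(s') = 2^(n − dim C − |Q| + 2·dim{c ∈ C : supp(c) ⊆ Q}). -/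
open scoped Classical

/-- Applying Hadamards on the coordinate set `Q` to the normalized indicator of an
`[n,k]` binary linear code `C` yields a state of `PAR = 2^(n − k − |Q| + 2j)`,
where `j` is the dimension of the subcode of `C` supported inside `Q`. -/
theorem stmt_18 (n k j : ℕ)
    (C : Submodule (ZMod 2) (Fin n → ZMod 2))
    (hC : Module.finrank (ZMod 2) C = k)
    (Q : Finset (Fin n))
    (s : (Fin n → ZMod 2) → ℝ)
    (hs : ∀ x, s x = if x ∈ C then (Real.sqrt (2 ^ k))⁻¹ else 0)
    (s' : (Fin n → ZMod 2) → ℝ)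
    (hs' : ∀ x, s' x = ((Real.sqrt 2)⁻¹) ^ Q.card *
      ∑ y : Fin n → ZMod 2,
        (if ∀ t ∉ Q, y t = x t
          then (-1 : ℝ) ^ ((∑ t ∈ Q, x t * y t).val) else 0) * s y)
    (D : Submodule (ZMod 2) (Fin n → ZMod 2))
    (hD : (D : Set (Fin n → ZMod 2)) = {c | c ∈ C ∧ ∀ i, i ∉ Q → c i = 0})
    (hj : Module.finrank (ZMod 2) D = j) :
    (2 : ℝ) ^ n * (⨆ x : Fin n → ZMod 2, (s' x) ^ 2)
      = (2 : ℝ) ^ ((n : ℤ) - k - Q.card + 2 * j) := by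
  classical
  set a : ℝ := ((Real.sqrt 2)⁻¹) ^ Q.card with ha
  set b : ℝ := (Real.sqrt (2 ^ k))⁻¹ with hb
  have ha2 : a ^ 2 = ((2:ℝ) ^ Q.card)⁻¹ := by
    rw [ha, ← pow_mul, mul_comm, pow_mul, inv_pow, Real.sq_sqrt (by norm_num : (2:ℝ) ≥ 0), inv_pow]
  have hb2 : b ^ 2 = ((2:ℝ) ^ k)⁻¹ := by
    rw [hb, inv_pow, Real.sq_sqrt (by positivity)]
  have hapos : 0 < a := by positivity
  have hbpos : 0 < b := by positivity
  set A : (Fin n → ZMod 2) → Finset (Fin n → ZMod 2) :=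
    fun x => Finset.univ.filter (fun y => y ∈ C ∧ ∀ t ∉ Q, y t = x t) with hA
  have key : ∀ x, s' x = a * b * ∑ y ∈ A x, (-1:ℝ)^((∑ t ∈ Q, x t * y t).val) := by
    intro x
    rw [hs']
    have h1 : ∀ y : Fin n → ZMod 2,
        (if ∀ t ∉ Q, y t = x t then (-1 : ℝ) ^ ((∑ t ∈ Q, x t * y t).val) else 0) * s y
        = if (y ∈ C ∧ ∀ t ∉ Q, y t = x t) then b * (-1:ℝ)^((∑ t ∈ Q, x t * y t).val) else 0 := by
      intro y
      rw [hs y]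
      by_cases hy : y ∈ C
      · by_cases hq : ∀ t ∉ Q, y t = x t
        · rw [if_pos hq, if_pos hy, if_pos (show y ∈ C ∧ ∀ t ∉ Q, y t = x t from ⟨hy, hq⟩)]; ring
        · simp [hy, hq]
      · simp [hy]
    rw [Finset.sum_congr rfl (fun y _ => h1 y)]
    rw [← Finset.sum_filter, ← Finset.mul_sum]
    simp only [hA]
    ring
  -- cardinality of D
  have hDcard : Fintype.card D = 2 ^ j := by
    rw [Module.card_eq_pow_finrank (K := ZMod 2) (V := D), ZMod.card, hj]
  have hA0 : A 0 = Finset.univ.filter (fun y => y ∈ D) := by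
    ext y
    have := Set.ext_iff.mp hD y
    simp only [hA, Finset.mem_filter, Finset.mem_univ, true_and, Pi.zero_apply] at *
    constructor
    · intro h; exact this.mpr ⟨h.1, fun i hi => h.2 i hi⟩
    · intro h; exact ⟨(this.mp h).1, fun t ht => (this.mp h).2 t ht⟩
  have hA0card : (A 0).card = 2 ^ j := by
    rw [hA0, ← hDcard]
    exact (Fintype.card_subtype _).symm
  -- bound on card of A x
  have hcard : ∀ x, (A x).card ≤ 2 ^ j := by
    intro x
    rcases (A x).eq_empty_or_nonempty with h | ⟨c0, hc0⟩
    · simp [h]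
    · rw [← hA0card]
      apply Finset.card_le_card_of_injOn (fun c => c - c0)
      · intro c hc
        simp only [hA, Finset.mem_coe, Finset.mem_filter, Finset.mem_univ, true_and] at hc hc0 ⊢
        refine ⟨sub_mem hc.1 hc0.1, fun t ht => ?_⟩
        simp [Pi.sub_apply, hc.2 t ht, hc0.2 t ht]
      · intro c1 _ c2 _ h
        simpa using sub_left_injective.eq_iff.mp h
  -- value at 0
  have hT0 : ∑ y ∈ A 0, (-1:ℝ)^((∑ t ∈ Q, (0:Fin n → ZMod 2) t * y t).val) = 2 ^ j := by
    have : ∀ y ∈ A 0, (-1:ℝ)^((∑ t ∈ Q, (0:Fin n → ZMod 2) t * y t).val) = 1 := by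
      intro y _
      simp [Pi.zero_apply]
    rw [Finset.sum_congr rfl this, Finset.sum_const, hA0card]
    simp
  have hs'0 : s' 0 = a * b * 2 ^ j := by rw [key 0, hT0]
  -- bound
  have hbound : ∀ x, (s' x) ^ 2 ≤ (s' 0) ^ 2 := by
    intro x
    have habs : |s' x| ≤ s' 0 := by
      rw [key x, hs'0, abs_mul, abs_of_pos (mul_pos hapos hbpos)]
      apply mul_le_mul_of_nonneg_left _ (le_of_lt (mul_pos hapos hbpos))
      calc |∑ y ∈ A x, (-1:ℝ)^((∑ t ∈ Q, x t * y t).val)|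
          ≤ ∑ y ∈ A x, |(-1:ℝ)^((∑ t ∈ Q, x t * y t).val)| := Finset.abs_sum_le_sum_abs _ _
        _ = (A x).card := by simp [abs_pow]
        _ ≤ (2:ℝ) ^ j := by exact_mod_cast hcard x
    calc (s' x)^2 = |s' x|^2 := (sq_abs _).symm
      _ ≤ (s' 0)^2 := by
          apply pow_le_pow_left₀ (abs_nonneg _) habs
  have hsup : (⨆ x : Fin n → ZMod 2, (s' x) ^ 2) = (s' 0) ^ 2 :=
    le_antisymm (ciSup_le hbound) (le_ciSup (f := fun x : Fin n → ZMod 2 => (s' x)^2) (Set.Finite.bddAbove (Set.finite_range _)) 0)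
  rw [hsup, hs'0]
  have h2 : (2:ℝ) ≠ 0 := two_ne_zero
  rw [mul_pow, mul_pow, ha2, hb2]
  rw [show ((n:ℤ) - k - Q.card + 2*j) = (n:ℤ) + (2*j:ℕ) - (k:ℤ) - (Q.card:ℤ) by push_cast; ring]
  rw [zpow_sub₀ h2, zpow_sub₀ h2, zpow_add₀ h2, zpow_natCast, zpow_natCast, zpow_natCast, zpow_natCast]
  rw [pow_mul]
  field_simp
  rw [← pow_mul, ← pow_mul, Nat.mul_comm j 2]
end
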